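/- REG/Rn is properly contained in CFL/Rn: every language in REG/Rn belongs to CFL/Rn, and the language IP_* belongs to CFL/Rn but not to REG/Rn. -/

import Mathlib

open scoped BigOperators

/-- A rational one-way probabilistic finite automaton over alphabet `Λ`
(with endmarker matrices `matC` for ¢ and `matD` for $). -/
structure PFA (Λ : Type) where
  Q : Type
  fin : Fintype Q
  dec : DecidableEq Q
  start : Q
  final : Finset Q
  matC : Matrix Q Q ℚ
  matD : Matrix Q Q ℚ
  mat : Λ → Matrix Q Q ℚ
  nonnegC : ∀ i j, 0 ≤ matC i j
  nonnegD : ∀ i j, 0 ≤ matD i j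
  nonnegMat : ∀ σ i j, 0 ≤ mat σ i j
  rowC : ∀ i, ∑ j ∈ fin.elems, matC i j = 1
  rowD : ∀ i, ∑ j ∈ fin.elems, matD i j = 1
  rowMat : ∀ σ i, ∑ j ∈ fin.elems, mat σ i j = 1

/-- Acceptance probability of a 1pfa on an input string. -/
def PFA.accProb {Λ : Type} (M : PFA Λ) (x : List Λ) : ℚ :=
  letI := M.fin
  letI := M.dec
  ∑ q ∈ M.final,
    (Matrix.vecMul
      (x.foldl (fun v σ => Matrix.vecMul v (M.mat σ))
        (Matrix.vecMul (Pi.single M.start 1) M.matC))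
      M.matD) q

/-- `D` is a probability distribution on `Γ^n`. -/
def IsDist {Γ : Type} [Fintype Γ] {n : ℕ} (D : List.Vector Γ n → ℝ) : Prop :=
  (∀ y, 0 ≤ D y) ∧ ∑ y, D y = 1

open Classical in
/-- Probability, under randomized advice `D`, that the track string `[x//y]` lies in `L`. -/
noncomputable def randAccProb {Alp Γ : Type} [Fintype Γ] (L : Set (List (Alp × Γ)))
    {n : ℕ} (D : List.Vector Γ n → ℝ) (x : List Alp) : ℝ :=
  ∑ y : List.Vector Γ n, if x.zip y.toList ∈ L then D y else 0

/-- `S ∈ REG/n`. -/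
def InREGn {Alp : Type} (S : Set (List Alp)) : Prop :=
  ∃ (Γ : Type) (_ : Fintype Γ) (h : ℕ → List Γ), (∀ n, (h n).length = n) ∧
    ∃ (Q : Type) (_ : Fintype Q) (M : DFA (Alp × Γ) Q),
      ∀ x : List Alp, x ∈ S ↔ x.zip (h x.length) ∈ M.accepts

/-- `S ∈ REG/Rn` (bounded error, randomized advice). -/
def InREGRn {Alp : Type} (S : Set (List Alp)) : Prop :=
  ∃ (Γ : Type) (iΓ : Fintype Γ),
    letI := iΓ
    ∃ (Q : Type) (_ : Fintype Q) (M : DFA (Alp × Γ) Q) (ε : ℝ),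
      0 ≤ ε ∧ ε < 1 / 2 ∧
        ∃ D : (n : ℕ) → List.Vector Γ n → ℝ, (∀ n, IsDist (D n)) ∧
          ∀ (n : ℕ) (x : List Alp), x.length = n →
            (x ∈ S → 1 - ε ≤ randAccProb M.accepts (D n) x) ∧
            (x ∉ S → randAccProb M.accepts (D n) x ≤ ε)

/-- `S ∈ CFL/n`. -/
def InCFLn {Alp : Type} (S : Set (List Alp)) : Prop :=
  ∃ (Γ : Type) (_ : Fintype Γ) (h : ℕ → List Γ), (∀ n, (h n).length = n) ∧
    ∃ L : Language (Alp × Γ), L.IsContextFree ∧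
      ∀ x : List Alp, x ∈ S ↔ x.zip (h x.length) ∈ L

/-- `S ∈ CFL/Rn` (bounded error, randomized advice). -/
def InCFLRn {Alp : Type} (S : Set (List Alp)) : Prop :=
  ∃ (Γ : Type) (iΓ : Fintype Γ),
    letI := iΓ
    ∃ (L : Language (Alp × Γ)), L.IsContextFree ∧
      ∃ (ε : ℝ), 0 ≤ ε ∧ ε < 1 / 2 ∧
        ∃ D : (n : ℕ) → List.Vector Γ n → ℝ, (∀ n, IsDist (D n)) ∧
          ∀ (n : ℕ) (x : List Alp), x.length = n →
            (x ∈ S → 1 - ε ≤ randAccProb L (D n) x) ∧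
            (x ∉ S → randAccProb L (D n) x ≤ ε)

/-- `A ∈ 1C=LIN/lin` via the paper's 1pfa characterization. -/
def InOneCeqLin {Alp : Type} (A : Set (List Alp)) : Prop :=
  ∃ (Γ : Type) (_ : Fintype Γ) (h : ℕ → List Γ), (∀ n, (h n).length = n) ∧
    ∃ M : PFA (Alp × Γ),
      ∀ x : List Alp, x ∈ A ↔ M.accProb (x.zip (h x.length)) = 1 / 2

/-- `A ∈ 1PLIN/lin` via the paper's 1pfa characterization. -/
def InOnePLin {Alp : Type} (A : Set (List Alp)) : Prop :=
  ∃ (Γ : Type) (_ : Fintype Γ) (h : ℕ → List Γ), (∀ n, (h n).length = n) ∧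
    ∃ M : PFA (Alp × Γ),
      ∀ x : List Alp, x ∈ A ↔ 1 / 2 < M.accProb (x.zip (h x.length))

open Classical in
/-- `(A, μ) ∈ aver-REG/n`. -/
def InAverREGn {Alp : Type} [Fintype Alp] (A : Set (List Alp))
    (μ : (n : ℕ) → List.Vector Alp n → ℝ) : Prop :=
  ∃ (Γ : Type) (_ : Fintype Γ) (h : ℕ → List Γ), (∀ n, (h n).length = n) ∧
    ∃ (Q : Type) (_ : Fintype Q) (M : DFA (Alp × Γ) Q) (ε : ℝ),
      0 ≤ ε ∧ ε < 1 / 2 ∧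
        ∀ n : ℕ, 1 - ε ≤ ∑ x : List.Vector Alp n,
          if (x.toList.zip (h n) ∈ M.accepts ↔ x.toList ∈ A) then μ n x else 0

/-- The language `Dup = {ww : w ∈ {0,1}*}`. -/
def Dup : Set (List Bool) := {z | ∃ w : List Bool, z = w ++ w}

/-- The marked palindrome language `Pal_# = {w#w^R}` over the alphabet
`Option Bool` (with `none` playing the role of the marker `#`). -/
def PalHash : Set (List (Option Bool)) :=
  {z | ∃ w : List Bool, z = w.map some ++ none :: (w.reverse.map some)}

/-- Inner product (number of common `true` positions) of two bit strings. -/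
def innerProd (u v : List Bool) : ℕ :=
  ((u.zip v).filter fun p => p.1 && p.2).length

/-- The language `IP_* = {axy : a ∈ {λ,0,1}, |x| = |y|, x^R ⊙ y ≡ 0 (mod 2)}`. -/
def IPstar : Language Bool :=
  {z | ∃ a x y : List Bool, (a = [] ∨ a = [false] ∨ a = [true]) ∧
    z = a ++ x ++ y ∧ x.length = y.length ∧ innerProd x.reverse y % 2 = 0}

/-- A negligible function. -/
def Negligible (f : ℕ → ℝ) : Prop :=
  ∀ k : ℕ, 0 < k → ∃ N : ℕ, ∀ n ≥ N, f n ≤ 1 / (n : ℝ) ^ k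

/-- `L` is `REG/n`-pseudorandom. -/
def RegPseudorandom {Alp : Type} [Fintype Alp] (L : Set (List Alp)) : Prop :=
  ∀ B : Set (List Alp), InREGn B →
    Negligible fun n =>
      |(((symmDiff B L) ∩ {x | x.length = n}).ncard : ℝ) /
        (Fintype.card Alp : ℝ) ^ n - 1 / 2|

/-!
A DFA reading `[x//y]` is simulated by a right-linear grammar, so REG/Rn ⊆ CFL/Rn. For IP_*,
a single deterministic advice string marks the optional leading bit and the two halves `x`, `y` of
the rest of the input; the marked words form a context-free language whose grammar emits the
outermost pair `(x₁, y_last)` first and carries the parity of `x^R ⊙ y` in its nonterminal.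

For IP_* ∉ REG/Rn, feed inputs `x^R y` with `x, y ∈ {0,1}^m`: membership is decided by the
Hadamard sign `(-1)^(x ⊙ y)`. With error `ε < 1/2`, the acceptance bias `2 Pr[accept] - 1`
correlates with this sign by at least `δ = 1 - 2ε` at every entry, so by `δ·4^m` in total. For a
fixed advice string, acceptance of `x^R y` depends on `x` only through the state reached after
`x^R`, so the `±1` acceptance matrix has at most `q = |Q|` distinct rows, and Lindsey's lemma
bounds its correlation with the Hadamard matrix by `q·2^(3m/2)`. Averaging over the advice gives
`δ·2^(m/2) ≤ q`, which fails for large `m`.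
-/

open Finset

namespace ContextFreeRule

variable {T N : Type*} {r : ContextFreeRule T N}

lemma not_rewrites_map_terminal (w : List T) (v : List (Symbol T N)) :
    ¬ r.Rewrites (w.map Symbol.terminal) v := fun h => by
  simpa using h.nonterminal_input_mem

lemma Rewrites.eq_of_single_nonterminal {A : N} {p q : List T} {v : List (Symbol T N)}
    (h : r.Rewrites (p.map Symbol.terminal ++ Symbol.nonterminal A :: q.map Symbol.terminal) v) :
    r.input = A ∧ v = p.map Symbol.terminal ++ r.output ++ q.map Symbol.terminal := by
  induction p generalizing v with
  | nil =>
    cases h with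
    | head => simp
    | cons _ h => exact absurd h (not_rewrites_map_terminal q _)
  | cons a p ih =>
    cases h with
    | cons _ h => obtain ⟨rfl, rfl⟩ := ih h; simp

end ContextFreeRule

namespace DFA

variable {α : Type*} {σ : Type} [Fintype α] [Fintype σ] (M : DFA α σ)

open Classical in
@[reducible]
noncomputable def toGrammar : ContextFreeGrammar α where
  NT := σ
  initial := M.start
  rules := univ.image (fun p : σ × α => ⟨p.1, [.terminal p.2, .nonterminal (M.step p.1 p.2)]⟩) ∪
    (univ.filter (· ∈ M.accept)).image fun q => ⟨q, []⟩

lemma mem_toGrammar_rules {r : ContextFreeRule α σ} :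
    r ∈ M.toGrammar.rules ↔
      (∃ q a, r = ⟨q, [.terminal a, .nonterminal (M.step q a)]⟩) ∨ ∃ q ∈ M.accept, r = ⟨q, []⟩ := by
  simp [toGrammar, eq_comm (b := r)]

lemma toGrammar_derives_evalFrom (w : List α) (q : σ) :
    M.toGrammar.Derives [.nonterminal q] (w.map .terminal ++ [.nonterminal (M.evalFrom q w)]) := by
  induction w generalizing q with
  | nil => exact .refl _
  | cons a w ih =>
    have hstep : M.toGrammar.Produces [.nonterminal q] [.terminal a, .nonterminal (M.step q a)] :=
      ⟨_, M.mem_toGrammar_rules.2 (.inl ⟨q, a, rfl⟩), ContextFreeRule.Rewrites.input_output⟩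
    simpa using hstep.trans_derives ((ih (M.step q a)).append_left [.terminal a])

lemma toGrammar_derives_cases {s : List (Symbol α σ)}
    (h : M.toGrammar.Derives [.nonterminal M.start] s) :
    (∃ u, s = u.map .terminal ++ [.nonterminal (M.eval u)]) ∨
      ∃ u ∈ M.accepts, s = u.map .terminal := by
  induction h with
  | refl => exact .inl ⟨[], rfl⟩
  | tail _ hp ih =>
    obtain ⟨r, hr, hrw⟩ := hp
    rcases ih with ⟨u, rfl⟩ | ⟨u, -, rfl⟩
    · obtain ⟨hin, rfl⟩ := hrw.eq_of_single_nonterminal (q := [])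
      rcases M.mem_toGrammar_rules.1 hr with ⟨q, a, rfl⟩ | ⟨q, hq, rfl⟩
      · subst hin
        exact .inl ⟨u ++ [a], by simp [eval_append_singleton]⟩
      · subst hin
        exact .inr ⟨u, hq, by simp⟩
    · exact absurd hrw (ContextFreeRule.not_rewrites_map_terminal u _)

theorem language_toGrammar : M.toGrammar.language = M.accepts := by
  ext w
  rw [ContextFreeGrammar.mem_language_iff]
  constructor
  · intro h
    rcases M.toGrammar_derives_cases h with ⟨u, hu⟩ | ⟨u, hu, hwu⟩
    · have hmem : Symbol.nonterminal (M.eval u) ∈ w.map Symbol.terminal := by simp [hu]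
      simp at hmem
    · rwa [List.map_injective_iff.2 (fun _ _ => Symbol.terminal.inj) hwu]
  · intro hw
    refine (M.toGrammar_derives_evalFrom w M.start).trans_produces
      ⟨⟨M.eval w, []⟩, M.mem_toGrammar_rules.2 (.inr ⟨_, hw, rfl⟩), ?_⟩
    simpa [eval] using ContextFreeRule.rewrites_of_exists_parts ⟨M.eval w, []⟩ (w.map .terminal) []

theorem isContextFree_accepts : M.accepts.IsContextFree :=
  ⟨M.toGrammar, M.language_toGrammar⟩

end DFA

theorem InREGRn.inCFLRn {Alp : Type} [Fintype Alp] {S : Set (List Alp)} (hS : InREGRn S) :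
    InCFLRn S := by
  obtain ⟨Γ, _, Q, _, M, hM⟩ := hS
  exact ⟨Γ, inferInstance, M.accepts, M.isContextFree_accepts, hM⟩

section PointMass

variable {Γ : Type} [Fintype Γ] {n : ℕ}

lemma isDist_indicator_singleton (y₀ : List.Vector Γ n) :
    IsDist (({y₀} : Set (List.Vector Γ n)).indicator 1) := by
  refine ⟨fun _ => Set.indicator_nonneg (fun _ _ => zero_le_one) _, ?_⟩
  rw [sum_eq_single y₀ (fun y _ hy => by simp [hy]) (by simp)]
  simp

lemma randAccProb_indicator_singleton {Alp : Type} (L : Set (List (Alp × Γ)))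
    (y₀ : List.Vector Γ n) (x : List Alp) :
    randAccProb L (({y₀} : Set (List.Vector Γ n)).indicator 1) x =
      L.indicator 1 (x.zip y₀.toList) := by
  unfold randAccProb
  rw [sum_eq_single y₀ (fun y _ hy => by simp [hy]) (by simp)]
  by_cases hx : x.zip y₀.toList ∈ L <;> simp [hx]

end PointMass

theorem InCFLn.inCFLRn {Alp : Type} {S : Set (List Alp)} (hS : InCFLn S) : InCFLRn S := by
  obtain ⟨Γ, _, h, hlen, L, hL, hmem⟩ := hS
  refine ⟨Γ, inferInstance, L, hL, 0, le_rfl, by norm_num,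
    fun n => ({⟨h n, hlen n⟩} : Set (List.Vector Γ n)).indicator 1,
    fun n => isDist_indicator_singleton _, ?_⟩
  rintro n x rfl
  have hP := randAccProb_indicator_singleton L ⟨h x.length, hlen _⟩ x
  rw [List.Vector.toList_mk] at hP
  refine ⟨fun hx => ?_, fun hx => ?_⟩
  · rw [Set.indicator_of_mem ((hmem x).1 hx)] at hP
    exact (sub_zero (1 : ℝ)).le.trans_eq hP.symm
  · rw [Set.indicator_of_notMem (mt (hmem x).2 hx)] at hP
    exact hP.le

lemma List.zip_replicate_length {α β : Type*} (l : List α) (c : β) :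
    l.zip (.replicate l.length c) = l.map (·, c) := by
  rw [List.map_prod_left_eq_zip, List.map_const']

lemma innerProd_cons (a b : Bool) (u v : List Bool) :
    innerProd (a :: u) (b :: v) = (a && b).toNat + innerProd u v := by
  cases a <;> cases b <;> simp [innerProd, Nat.add_comm]

lemma bodd_innerProd_cons (a b : Bool) (u v : List Bool) :
    (innerProd (a :: u) (b :: v)).bodd = xor (innerProd u v).bodd (a && b) := by
  cases a <;> cases b <;> simp [innerProd_cons]

lemma Nat.bodd_eq_false_iff_mod_two_eq_zero {n : ℕ} : n.bodd = false ↔ n % 2 = 0 := by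
  rw [Nat.mod_two_of_bodd]
  cases n.bodd <;> simp

lemma mem_IPstar_iff {z : List Bool} :
    z ∈ IPstar ↔ ∃ a u v : List Bool, a.length ≤ 1 ∧ z = a ++ u ++ v ∧ u.length = v.length ∧
      innerProd u.reverse v % 2 = 0 := by
  have hshort (a : List Bool) : (a = [] ∨ a = [false] ∨ a = [true]) ↔ a.length ≤ 1 := by
    match a with
    | [] | [false] | [true] | _ :: _ :: _ => simp
  simp only [IPstar, hshort]
  rfl

/-- The advice track: `lead` marks the optional leading bit `a`, `left` and `right` the halves
`x` and `y` of a word `a x y` of IP_*. -/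
inductive IPTrack
  | lead
  | left
  | right
  deriving DecidableEq

namespace IPTrack

instance : Fintype IPTrack := ⟨{lead, left, right}, fun t => by cases t <;> simp⟩

def marked : Language (Bool × IPTrack) :=
  {w | ∃ a u v : List Bool, a.length ≤ 1 ∧ u.length = v.length ∧ innerProd u.reverse v % 2 = 0 ∧
    w = a.map (·, lead) ++ u.map (·, left) ++ v.map (·, right)}

open Classical in
/-- From the nonterminal `some p` the grammar derives the marked words `x y` with
`x^R ⊙ y ≡ p (mod 2)`; `none` is the start symbol. -/
@[reducible]
noncomputable def grammar : ContextFreeGrammar (Bool × IPTrack) where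
  NT := Option Bool
  initial := none
  rules := {⟨none, [.nonterminal (some false)]⟩, ⟨some false, []⟩} ∪
    (univ.image fun c => ⟨none, [.terminal (c, lead), .nonterminal (some false)]⟩) ∪
    univ.image fun ((p, a, b) : Bool × Bool × Bool) =>
      ⟨some p, [.terminal (a, left), .nonterminal (some (xor p (a && b))), .terminal (b, right)]⟩

lemma mem_grammar_rules {r : ContextFreeRule (Bool × IPTrack) (Option Bool)} :
    r ∈ grammar.rules ↔
      r = ⟨none, [.nonterminal (some false)]⟩ ∨ r = ⟨some false, []⟩ ∨
      (∃ c, r = ⟨none, [.terminal (c, lead), .nonterminal (some false)]⟩) ∨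
      ∃ p a b, r = ⟨some p,
        [.terminal (a, left), .nonterminal (some (xor p (a && b))), .terminal (b, right)]⟩ := by
  simp only [grammar, mem_union, mem_insert, mem_singleton, mem_image, mem_univ, true_and,
    Prod.exists, eq_comm (b := r), or_assoc]

/-- `u` is stored reversed, so that each rule application conses onto both `u` and `v`. -/
def sententialForm (a u v : List Bool) : List (Symbol (Bool × IPTrack) (Option Bool)) :=
  (a.map (·, lead) ++ u.reverse.map (·, left)).map .terminal ++
    .nonterminal (some (innerProd u v).bodd) :: (v.map (·, right)).map .terminal

lemma grammar_derives_sententialForm {a : List Bool} (ha : a.length ≤ 1) :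
    ∀ u v : List Bool, u.length = v.length →
      grammar.Derives [.nonterminal none] (sententialForm a u v)
  | [], [], _ => by
    match a, ha with
    | [], _ => exact .single ⟨_, mem_grammar_rules.2 (.inl rfl),
        ContextFreeRule.Rewrites.input_output⟩
    | [c], _ => exact .single ⟨_, mem_grammar_rules.2 (.inr (.inr (.inl ⟨c, rfl⟩))),
        ContextFreeRule.Rewrites.input_output⟩
  | a' :: u, b' :: v, h => by
    refine (grammar_derives_sententialForm ha u v (by simpa using h)).trans_produces ⟨_,
      mem_grammar_rules.2 (.inr (.inr (.inr ⟨(innerProd u v).bodd, a', b', rfl⟩))), ?_⟩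
    simpa [sententialForm, bodd_innerProd_cons] using ContextFreeRule.rewrites_of_exists_parts
      ⟨some (innerProd u v).bodd, [.terminal (a', left),
        .nonterminal (some (xor (innerProd u v).bodd (a' && b'))), .terminal (b', right)]⟩
      ((a.map (·, lead) ++ u.reverse.map (·, left)).map .terminal)
      ((v.map (·, right)).map .terminal)

lemma grammar_derives_cases {s : List (Symbol (Bool × IPTrack) (Option Bool))}
    (h : grammar.Derives [.nonterminal none] s) :
    s = [.nonterminal none] ∨
      (∃ a u v : List Bool, a.length ≤ 1 ∧ u.length = v.length ∧ s = sententialForm a u v) ∨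
      ∃ w ∈ marked, s = w.map .terminal := by
  induction h with
  | refl => exact .inl rfl
  | tail _ hp ih =>
    obtain ⟨r, hr, hrw⟩ := hp
    rcases ih with rfl | ⟨a, u, v, ha, huv, rfl⟩ | ⟨w, -, rfl⟩
    · obtain ⟨hin, rfl⟩ := hrw.eq_of_single_nonterminal (p := []) (q := [])
      rcases mem_grammar_rules.1 hr with rfl | rfl | ⟨c, rfl⟩ | ⟨p, a, b, rfl⟩
      · exact .inr (.inl ⟨[], [], [], by simp, rfl, by simp [sententialForm, innerProd]⟩)
      · cases hin
      · exact .inr (.inl ⟨[c], [], [], by simp, rfl, by simp [sententialForm, innerProd]⟩)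
      · cases hin
    · obtain ⟨hin, rfl⟩ := hrw.eq_of_single_nonterminal
      rcases mem_grammar_rules.1 hr with rfl | rfl | ⟨c, rfl⟩ | ⟨p, a', b', rfl⟩
      · cases hin
      · refine .inr (.inr ⟨_, ⟨a, u.reverse, v, ha, by simpa using huv, ?_, rfl⟩, by simp⟩)
        simpa [Nat.bodd_eq_false_iff_mod_two_eq_zero] using (Option.some.inj hin).symm
      · cases hin
      · cases Option.some.inj hin
        exact .inr (.inl ⟨a, a' :: u, b' :: v, ha, by simpa using huv,
          by simp [sententialForm, bodd_innerProd_cons]⟩)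
    · exact absurd hrw (ContextFreeRule.not_rewrites_map_terminal w _)

theorem language_grammar : grammar.language = marked := by
  ext w
  rw [ContextFreeGrammar.mem_language_iff]
  constructor
  · intro h
    rcases grammar_derives_cases h with hw | ⟨a, u, v, -, -, hw⟩ | ⟨w', hw', hw⟩
    · have hmem : (.nonterminal none : Symbol _ grammar.NT) ∈ w.map .terminal := by simp [hw]
      simp at hmem
    · have hmem : Symbol.nonterminal (some (innerProd u v).bodd) ∈ w.map Symbol.terminal := by
        simp [hw, sententialForm]
      simp at hmem
    · rwa [List.map_injective_iff.2 (fun _ _ => Symbol.terminal.inj) hw]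
  · rintro ⟨a, u, v, ha, huv, hip, rfl⟩
    refine (grammar_derives_sententialForm ha u.reverse v (by simpa using huv)).trans_produces
      ⟨_, mem_grammar_rules.2 (.inr (.inl rfl)), ?_⟩
    have hpar : (innerProd u.reverse v).bodd = false :=
      Nat.bodd_eq_false_iff_mod_two_eq_zero.2 hip
    simpa [sententialForm, hpar] using ContextFreeRule.rewrites_of_exists_parts ⟨some false, []⟩
      ((a.map (·, lead) ++ u.map (·, left)).map .terminal) ((v.map (·, right)).map .terminal)

theorem isContextFree_marked : marked.IsContextFree :=
  ⟨grammar, language_grammar⟩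

def advice (n : ℕ) : List IPTrack :=
  .replicate (n % 2) lead ++ .replicate (n / 2) left ++ .replicate (n / 2) right

lemma length_advice (n : ℕ) : (advice n).length = n := by
  simp only [advice, List.length_append, List.length_replicate]
  omega

lemma zip_advice {a u v : List Bool} (ha : a.length ≤ 1) (huv : u.length = v.length) :
    (a ++ u ++ v).zip (advice (a ++ u ++ v).length) =
      a.map (·, lead) ++ u.map (·, left) ++ v.map (·, right) := by
  have hmod : (a ++ u ++ v).length % 2 = a.length := by simp only [List.length_append]; omega
  have hdiv : (a ++ u ++ v).length / 2 = u.length := by simp only [List.length_append]; omega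
  rw [advice, hmod, hdiv, List.zip_append (by simp), List.zip_append (by simp),
    List.zip_replicate_length, List.zip_replicate_length, huv, List.zip_replicate_length]

lemma zip_advice_mem_marked_iff (x : List Bool) :
    x.zip (advice x.length) ∈ marked ↔ x ∈ IPstar := by
  rw [mem_IPstar_iff]
  constructor
  · rintro ⟨a, u, v, ha, huv, hip, hx⟩
    refine ⟨a, u, v, ha, ?_, huv, hip⟩
    have := congrArg (List.map Prod.fst) hx
    rw [List.map_fst_zip (by rw [length_advice])] at this
    simpa [Function.comp_def] using this
  · rintro ⟨a, u, v, ha, rfl, huv, hip⟩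
    exact ⟨a, u, v, ha, huv, hip, zip_advice ha huv⟩

end IPTrack

theorem inCFLn_IPstar : InCFLn IPstar :=
  ⟨IPTrack, inferInstance, IPTrack.advice, IPTrack.length_advice, IPTrack.marked,
    IPTrack.isContextFree_marked, fun x => (IPTrack.zip_advice_mem_marked_iff x).symm⟩

noncomputable def hadamard {m : ℕ} (x y : Fin m → Bool) : ℝ :=
  ∏ i, if x i && y i then -1 else 1

lemma hadamard_eq_neg_one_pow_innerProd {m : ℕ} (x y : Fin m → Bool) :
    hadamard x y = (-1) ^ innerProd (List.ofFn x) (List.ofFn y) := by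
  induction m with
  | zero => simp [hadamard, innerProd]
  | succ m ih =>
    rw [hadamard, Fin.prod_univ_succ, ← hadamard, ih, List.ofFn_succ, List.ofFn_succ,
      innerProd_cons, pow_add]
    cases x 0 <;> cases y 0 <;> simp

lemma sum_hadamard_mul_hadamard {m : ℕ} (y y' : Fin m → Bool) :
    ∑ x, hadamard x y * hadamard x y' = if y = y' then (2 : ℝ) ^ m else 0 := by
  have hfactor (i : Fin m) : ∑ b : Bool, (if b && y i then -1 else 1) *
      (if b && y' i then (-1 : ℝ) else 1) = if y i = y' i then 2 else 0 := by
    cases y i <;> cases y' i <;> norm_num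
  simp only [hadamard, ← prod_mul_distrib]
  rw [← Fintype.prod_sum fun i b =>
      (if b && y i then (-1 : ℝ) else 1) * (if b && y' i then -1 else 1),
    prod_congr rfl fun i _ => hfactor i]
  split_ifs with h
  · simp [h]
  · obtain ⟨i, hi⟩ := Function.ne_iff.1 h
    exact prod_eq_zero (mem_univ i) (if_neg hi)

lemma nonneg_of_orthogonal {α β : Type*} [Fintype α] [DecidableEq β] {K : α → β → ℝ} {N : ℝ}
    (hK : ∀ y y', ∑ x, K x y * K x y' = if y = y' then N else 0) (y : β) : 0 ≤ N := by
  simpa using (sum_nonneg fun x _ => mul_self_nonneg (K x y)).trans_eq (hK y y)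

section Orthogonal

variable {α β : Type*} [Fintype α] [Fintype β] [DecidableEq β] {K : α → β → ℝ} {N : ℝ}

lemma sum_sq_sum_mul_eq_of_orthogonal
    (hK : ∀ y y', ∑ x, K x y * K x y' = if y = y' then N else 0) (v : β → ℝ) :
    ∑ x, (∑ y, K x y * v y) ^ 2 = N * ∑ y, v y ^ 2 := by
  simp_rw [sq, sum_mul_sum, mul_sum]
  rw [sum_comm]
  refine sum_congr rfl fun y _ => ?_
  rw [sum_comm]
  simp_rw [show ∀ x y', K x y * v y * (K x y' * v y') = v y * v y' * (K x y * K x y') by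
    intros; ring, ← mul_sum, hK]
  simp [mul_comm]

lemma nonneg_mul_card_of_orthogonal
    (hK : ∀ y y', ∑ x, K x y * K x y' = if y = y' then N else 0) :
    0 ≤ N * Fintype.card β := by
  rw [mul_comm, ← nsmul_eq_mul, ← card_univ, ← sum_const]
  exact sum_nonneg fun y _ => nonneg_of_orthogonal hK y

/-- Lindsey's lemma -/
lemma sq_sum_sum_mul_le_of_orthogonal
    (hK : ∀ y y', ∑ x, K x y * K x y' = if y = y' then N else 0) (X : Finset α) {v : β → ℝ}
    (hv : ∀ y, |v y| ≤ 1) :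
    (∑ x ∈ X, ∑ y, K x y * v y) ^ 2 ≤ #X * (N * Fintype.card β) := by
  calc (∑ x ∈ X, ∑ y, K x y * v y) ^ 2 ≤ #X * ∑ x ∈ X, (∑ y, K x y * v y) ^ 2 :=
        sq_sum_le_card_mul_sum_sq (s := X) (f := fun x => ∑ y, K x y * v y)
    _ ≤ #X * ∑ x, (∑ y, K x y * v y) ^ 2 := by
        gcongr
        exact X.subset_univ
    _ = #X * (N * ∑ y, v y ^ 2) := by rw [sum_sq_sum_mul_eq_of_orthogonal hK]
    _ ≤ #X * (N * Fintype.card β) := by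
        refine mul_le_mul_of_nonneg_left ?_ (Nat.cast_nonneg _)
        rw [mul_sum, mul_comm, ← nsmul_eq_mul, ← card_univ, ← sum_const]
        refine sum_le_sum fun y _ => ?_
        exact mul_le_of_le_one_right (nonneg_of_orthogonal hK y)
          ((sq_le_one_iff_abs_le_one _).2 (hv y))

lemma abs_sum_sum_mul_comp_le_of_orthogonal
    (hK : ∀ y y', ∑ x, K x y * K x y' = if y = y' then N else 0)
    {Q : Type*} [Fintype Q] [DecidableEq Q] (f : α → Q) {σ : Q → β → ℝ}
    (hσ : ∀ q y, |σ q y| ≤ 1) :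
    |∑ x, ∑ y, K x y * σ (f x) y| ≤
      Fintype.card Q * √(Fintype.card α * (N * Fintype.card β)) := by
  have hfiber (q : Q) :
      |∑ x with f x = q, ∑ y, K x y * σ (f x) y| ≤ √(Fintype.card α * (N * Fintype.card β)) := by
    rw [sum_congr rfl fun x hx => by rw [(mem_filter.1 hx).2]]
    refine Real.abs_le_sqrt ((sq_sum_sum_mul_le_of_orthogonal hK _ (hσ q)).trans ?_)
    exact mul_le_mul_of_nonneg_right (by exact_mod_cast card_le_univ _)
      (nonneg_mul_card_of_orthogonal hK)
  calc |∑ x, ∑ y, K x y * σ (f x) y|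
      = |∑ q, ∑ x with f x = q, ∑ y, K x y * σ (f x) y| := by rw [sum_fiberwise]
    _ ≤ ∑ q, |∑ x with f x = q, ∑ y, K x y * σ (f x) y| := abs_sum_le_sum_abs _ _
    _ ≤ ∑ _q : Q, √(Fintype.card α * (N * Fintype.card β)) := sum_le_sum fun q _ => hfiber q
    _ = _ := by simp

end Orthogonal

lemma DFA.mem_accepts_zip_append {α γ Q : Type*} (M : DFA (α × γ) Q) {s t : List α}
    {w₁ w₂ : List γ} (h : s.length = w₁.length) :
    (s ++ t).zip (w₁ ++ w₂) ∈ M.accepts ↔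
      M.evalFrom (M.eval (s.zip w₁)) (t.zip w₂) ∈ M.accept := by
  rw [List.zip_append h, DFA.mem_accepts, DFA.eval, DFA.evalFrom_of_append]

lemma abs_two_mul_indicator_sub_one_le {ι : Type*} (s : Set ι) (i : ι) :
    |2 * s.indicator 1 i - 1| ≤ (1 : ℝ) := by
  by_cases hi : i ∈ s <;> norm_num [hi]

lemma reverse_append_mem_IPstar_iff {u v : List Bool} (h : u.length = v.length) :
    u.reverse ++ v ∈ IPstar ↔ innerProd u v % 2 = 0 := by
  rw [mem_IPstar_iff]
  constructor
  · rintro ⟨a, u', v', ha, heq, huv, hip⟩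
    have hlen := congrArg List.length heq
    simp only [List.length_append, List.length_reverse] at hlen
    obtain rfl : a = [] := List.eq_nil_of_length_eq_zero (by omega)
    obtain ⟨rfl, rfl⟩ := List.append_inj heq (by simp; omega)
    simpa using hip
  · intro hip
    exact ⟨[], u.reverse, v, by simp, by simp, by simpa using h, by simpa using hip⟩

def ipInput {m : ℕ} (x y : Fin m → Bool) : List Bool :=
  (List.ofFn x).reverse ++ List.ofFn y

lemma length_ipInput {m : ℕ} (x y : Fin m → Bool) : (ipInput x y).length = m + m := by
  simp [ipInput]

lemma ipInput_mem_IPstar_iff {m : ℕ} (x y : Fin m → Bool) :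
    ipInput x y ∈ IPstar ↔ innerProd (List.ofFn x) (List.ofFn y) % 2 = 0 :=
  reverse_append_mem_IPstar_iff (by simp)

lemma le_hadamard_mul_bias {m : ℕ} (x y : Fin m → Bool) {ε p : ℝ}
    (hyes : ipInput x y ∈ IPstar → 1 - ε ≤ p) (hno : ipInput x y ∉ IPstar → p ≤ ε) :
    1 - 2 * ε ≤ hadamard x y * (2 * p - 1) := by
  rw [hadamard_eq_neg_one_pow_innerProd]
  rcases Nat.mod_two_eq_zero_or_one (innerProd (List.ofFn x) (List.ofFn y)) with h | h
  · rw [(Nat.even_iff.2 h).neg_one_pow]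
    linarith [hyes ((ipInput_mem_IPstar_iff x y).2 h)]
  · rw [(Nat.odd_iff.2 h).neg_one_pow]
    linarith [hno fun hx => by have := (ipInput_mem_IPstar_iff x y).1 hx; omega]

lemma abs_sum_hadamard_mul_accepts_le {Γ Q : Type*} [Fintype Q] (M : DFA (Bool × Γ) Q)
    {m : ℕ} {w₁ w₂ : List Γ} (hw : w₁.length = m) :
    |∑ x : Fin m → Bool, ∑ y, hadamard x y *
        (2 * (M.accepts : Set _).indicator 1 ((ipInput x y).zip (w₁ ++ w₂)) - 1)|
      ≤ Fintype.card Q * √(2 ^ m * (2 ^ m * 2 ^ m)) := by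
  classical
  have key := abs_sum_sum_mul_comp_le_of_orthogonal sum_hadamard_mul_hadamard
    (fun x : Fin m → Bool => M.eval ((List.ofFn x).reverse.zip w₁))
    (σ := fun q y => 2 * M.accept.indicator 1 (M.evalFrom q ((List.ofFn y).zip w₂)) - 1)
    (fun _ _ => abs_two_mul_indicator_sub_one_le _ _)
  simp only [Fintype.card_fun, Fintype.card_fin, Fintype.card_bool, Nat.cast_pow,
    Nat.cast_ofNat] at key
  convert key using 6 with x _ y _
  have hacc := M.mem_accepts_zip_append (t := List.ofFn y) (w₂ := w₂)
    (show (List.ofFn x).reverse.length = w₁.length by simp [hw])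
  by_cases h : M.evalFrom (M.eval ((List.ofFn x).reverse.zip w₁)) ((List.ofFn y).zip w₂) ∈ M.accept
  · rw [Set.indicator_of_mem h, ipInput, Set.indicator_of_mem (hacc.2 h)]
    rfl
  · rw [Set.indicator_of_notMem h, ipInput, Set.indicator_of_notMem (mt hacc.1 h)]

section RandAccProb

variable {Alp Γ : Type} [Fintype Γ] {n : ℕ}

lemma randAccProb_eq_sum_indicator (L : Set (List (Alp × Γ))) (D : List.Vector Γ n → ℝ)
    (x : List Alp) : randAccProb L D x = ∑ y, D y * L.indicator 1 (x.zip y.toList) := by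
  unfold randAccProb
  refine sum_congr rfl fun y _ => ?_
  by_cases hy : x.zip y.toList ∈ L <;> simp [hy]

lemma two_mul_randAccProb_sub_one (L : Set (List (Alp × Γ))) {D : List.Vector Γ n → ℝ}
    (hD : IsDist D) (x : List Alp) :
    2 * randAccProb L D x - 1 = ∑ y, D y * (2 * L.indicator 1 (x.zip y.toList) - 1) := by
  simp only [randAccProb_eq_sum_indicator, mul_sub, mul_one, sum_sub_distrib, hD.2, mul_sum]
  congr 1
  exact sum_congr rfl fun y _ => by ring

end RandAccProb

lemma sum_hadamard_mul_bias_le {Γ Q : Type} [Fintype Γ] [Fintype Q] (M : DFA (Bool × Γ) Q)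
    {m : ℕ} {D : List.Vector Γ (m + m) → ℝ} (hD : IsDist D) :
    ∑ x : Fin m → Bool, ∑ y, hadamard x y * (2 * randAccProb M.accepts D (ipInput x y) - 1)
      ≤ Fintype.card Q * √(2 ^ m * (2 ^ m * 2 ^ m)) := by
  have hbound (w : List.Vector Γ (m + m)) := abs_sum_hadamard_mul_accepts_le M (m := m)
    (w₁ := w.toList.take m) (w₂ := w.toList.drop m) (by simp)
  simp only [List.take_append_drop] at hbound
  have hsplit (x y : Fin m → Bool) := two_mul_randAccProb_sub_one M.accepts hD (ipInput x y)
  calc ∑ x : Fin m → Bool, ∑ y, hadamard x y * (2 * randAccProb M.accepts D (ipInput x y) - 1)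
      = ∑ w, D w * ∑ x : Fin m → Bool, ∑ y, hadamard x y *
          (2 * (M.accepts : Set _).indicator 1 ((ipInput x y).zip w.toList) - 1) := by
        simp_rw [hsplit, mul_sum, mul_left_comm (hadamard _ _)]
        rw [sum_congr rfl fun x _ => sum_comm, sum_comm]
    _ ≤ ∑ w, D w * (Fintype.card Q * √(2 ^ m * (2 ^ m * 2 ^ m))) :=
        sum_le_sum fun w _ =>
          mul_le_mul_of_nonneg_left ((le_abs_self _).trans (hbound w)) (hD.1 w)
    _ = Fintype.card Q * √(2 ^ m * (2 ^ m * 2 ^ m)) := by rw [← sum_mul, hD.2, one_mul]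

lemma sq_mul_le_sq_of_mul_le_mul_sqrt {δ q N : ℝ} (hδ : 0 ≤ δ) (hN : 0 < N)
    (h : δ * (N * N) ≤ q * √(N * (N * N))) : δ ^ 2 * N ≤ q ^ 2 := by
  rw [← mul_assoc, Real.sqrt_mul (by positivity), Real.sqrt_mul_self hN.le] at h
  have hδN : δ * N ≤ q * √N := by nlinarith
  have := mul_self_le_mul_self (by positivity) hδN
  nlinarith [Real.mul_self_sqrt hN.le]

theorem not_inREGRn_IPstar : ¬ InREGRn IPstar := by
  rintro ⟨Γ, _, Q, _, M, ε, -, hε, D, hD, H⟩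
  have hδ : 0 < 1 - 2 * ε := by linarith
  obtain ⟨m, hm⟩ := pow_unbounded_of_one_lt
    ((Fintype.card Q : ℝ) ^ 2 / (1 - 2 * ε) ^ 2) (by norm_num : (1 : ℝ) < 2)
  rw [div_lt_iff₀ (by positivity)] at hm
  have hcorr : (1 - 2 * ε) * (2 ^ m * 2 ^ m) ≤ ∑ x : Fin m → Bool, ∑ y,
      hadamard x y * (2 * randAccProb M.accepts (D (m + m)) (ipInput x y) - 1) :=
    calc (1 - 2 * ε) * (2 ^ m * 2 ^ m)
        = ∑ _x : Fin m → Bool, ∑ _y : Fin m → Bool, (1 - 2 * ε) := by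
          simp only [sum_const, card_univ, Fintype.card_fun, Fintype.card_bool, Fintype.card_fin,
            nsmul_eq_mul]
          push_cast
          ring
      _ ≤ _ := sum_le_sum fun x _ => sum_le_sum fun y _ => le_hadamard_mul_bias x y
          (H _ _ (length_ipInput x y)).1 (H _ _ (length_ipInput x y)).2
  have := sq_mul_le_sq_of_mul_le_mul_sqrt hδ.le (by positivity)
    (hcorr.trans (sum_hadamard_mul_bias_le M (hD (m + m))))
  linarith

theorem stmt15 :
    (∀ (Alp : Type) [Fintype Alp] (S : Set (List Alp)), InREGRn S → InCFLRn S) ∧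
    InCFLRn IPstar ∧ ¬ InREGRn IPstar :=
  ⟨fun _ _ _ hS => hS.inCFLRn, inCFLn_IPstar.inCFLRn, not_inREGRn_IPstar⟩
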